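/- The rank function φ is strictly monotone with respect to strict cumulativity: for all M, N ∈ 𝒯 and i ∈ ω, if M ≺_i N then φ(M) < φ(N); consequently M ≺ N implies φ(M) < φ(N). -/

import Mathlib

namespace ECC

/-- Terms of Luo's Extended Calculus of Constructions, in de Bruijn representation. -/
inductive Term : Type
  | var   : ℕ → Term
  | prop  : Term
  | type  : ℕ → Term
  | pi    : Term → Term → Term
  | sigma : Term → Term → Term
  | lam   : Term → Term → Term
  | app   : Term → Term → Term
  | pair  : Term → Term → Term → Term   -- ⟨M, N⟩_B with type annotation B
  | proj1 : Term → Term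
  | proj2 : Term → Term
deriving DecidableEq

/-- Lift (shift by `d`) all de Bruijn indices ≥ `k`. -/
def lift (d : ℕ) : ℕ → Term → Term
  | k, .var n       => if n < k then .var n else .var (n + d)
  | _, .prop        => .prop
  | _, .type j      => .type j
  | k, .pi A B      => .pi (lift d k A) (lift d (k+1) B)
  | k, .sigma A B   => .sigma (lift d k A) (lift d (k+1) B)
  | k, .lam A M     => .lam (lift d k A) (lift d (k+1) M)
  | k, .app M N     => .app (lift d k M) (lift d k N)
  | k, .pair M N B  => .pair (lift d k M) (lift d k N) (lift d k B)
  | k, .proj1 M     => .proj1 (lift d k M)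
  | k, .proj2 M     => .proj2 (lift d k M)

/-- Capture-avoiding substitution `[N/x]A` of the term `N` for the variable `x` in `A`. -/
def subst (N : Term) : ℕ → Term → Term
  | k, .var n       => if n < k then .var n else if n = k then lift k 0 N else .var (n - 1)
  | _, .prop        => .prop
  | _, .type j      => .type j
  | k, .pi A B      => .pi (subst N k A) (subst N (k+1) B)
  | k, .sigma A B   => .sigma (subst N k A) (subst N (k+1) B)
  | k, .lam A M     => .lam (subst N k A) (subst N (k+1) M)
  | k, .app M M'    => .app (subst N k M) (subst N k M')
  | k, .pair M M' B => .pair (subst N k M) (subst N k M') (subst N k B)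
  | k, .proj1 M     => .proj1 (subst N k M)
  | k, .proj2 M     => .proj2 (subst N k M)

/-- `[N/x₀]B` : substitution for the outermost bound variable. -/
def subst0 (B N : Term) : Term := subst N 0 B

/-- One-step reduction (β together with the projection reductions, closed under all
term-formation congruences). -/
inductive Red : Term → Term → Prop
  | beta    : Red (.app (.lam A M) N) (subst0 M N)
  | pr1     : Red (.proj1 (.pair M N B)) M
  | pr2     : Red (.proj2 (.pair M N B)) N
  | piL     : Red A A' → Red (.pi A B) (.pi A' B)
  | piR     : Red B B' → Red (.pi A B) (.pi A B')
  | sigmaL  : Red A A' → Red (.sigma A B) (.sigma A' B)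
  | sigmaR  : Red B B' → Red (.sigma A B) (.sigma A B')
  | lamL    : Red A A' → Red (.lam A M) (.lam A' M)
  | lamR    : Red M M' → Red (.lam A M) (.lam A M')
  | appL    : Red M M' → Red (.app M N) (.app M' N)
  | appR    : Red N N' → Red (.app M N) (.app M N')
  | pairL   : Red M M' → Red (.pair M N B) (.pair M' N B)
  | pairR   : Red N N' → Red (.pair M N B) (.pair M N' B)
  | pairB   : Red B B' → Red (.pair M N B) (.pair M N B')
  | proj1C  : Red M M' → Red (.proj1 M) (.proj1 M')
  | proj2C  : Red M M' → Red (.proj2 M) (.proj2 M')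

/-- Conversion `≃` : the equivalence relation generated by reduction. -/
def Conv : Term → Term → Prop := Relation.EqvGen Red

/-- `A` has a normal form. -/
def HasNF (A : Term) : Prop :=
  ∃ B, Relation.ReflTransGen Red A B ∧ ∀ C, ¬ Red B C

/-- `𝒯` : the set of normalisable terms. -/
def Tset : Set Term := {A | HasNF A}

/-- Universes are `Prop` and the `Type_j`. -/
def IsUniv (T : Term) : Prop := T = .prop ∨ ∃ j, T = .type j

/-- The cumulativity relation `⪯` : the smallest preorder containing conversion,
the universe order, congruence for Π in the codomain, and congruence for Σ in both
components. -/
inductive Cum : Term → Term → Prop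
  | conv     : Conv A B → Cum A B
  | propType : Cum .prop (.type 0)
  | typeType : j ≤ k → Cum (.type j) (.type k)
  | pi       : Conv A A' → Cum B B' → Cum (.pi A B) (.pi A' B')
  | sigma    : Cum A A' → Cum B B' → Cum (.sigma A B) (.sigma A' B')
  | trans    : Cum A B → Cum B C → Cum A C

/-- The strict cumulativity relation `≺` : `A ⪯ B` and `A ≄ B`. -/
def SCum (A B : Term) : Prop := Cum A B ∧ ¬ Conv A B

/-- The stratified cumulativity relations `⪯ᵢ`. -/
inductive CumL : ℕ → Term → Term → Prop
  | conv     : Conv A B → CumL i A B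
  | propType : CumL i .prop (.type j)
  | typeType : j < k → CumL i (.type j) (.type k)
  | succ     : CumL i A B → CumL (i+1) A B
  | pi       : Conv M (.pi A B) → Conv N (.pi A' B') → Conv A A' → CumL i B B' →
               CumL (i+1) M N
  | sigma    : Conv M (.sigma A B) → Conv N (.sigma A' B') → CumL i A A' → CumL i B B' →
               CumL (i+1) M N

/-- Strict stratified cumulativity `≺ᵢ`. -/
def SCumL (i : ℕ) (A B : Term) : Prop := CumL i A B ∧ ¬ Conv A B

/-- Is the outermost symbol of a term Π or Σ? -/
def BinderHeaded : Term → Prop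
  | .pi _ _    => True
  | .sigma _ _ => True
  | _          => False

/-- The base stratum: normalisable terms not convertible to a binder-headed
normalisable term. -/
def Base : Set Term :=
  {T | HasNF T ∧ ¬ ∃ B, HasNF B ∧ BinderHeaded B ∧ Conv T B}

/-- The stratification `(Π_n, Σ_n)` of `𝒯`. -/
def Strata : ℕ → Set Term × Set Term
  | 0 => (Base, Base)
  | n+1 =>
    ({T | ∃ k l, ∃ _ : k + l = n, ∃ A B, HasNF (Term.pi A B) ∧ Conv T (Term.pi A B) ∧
        A ∈ (Strata k).1 ∪ (Strata k).2 ∧ B ∈ (Strata l).1 ∪ (Strata l).2},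
     {T | ∃ k l, ∃ _ : k + l = n, ∃ A B, HasNF (Term.sigma A B) ∧ Conv T (Term.sigma A B) ∧
        A ∈ (Strata k).1 ∪ (Strata k).2 ∧ B ∈ (Strata l).1 ∪ (Strata l).2})
termination_by n => n
decreasing_by all_goals omega

/-- The stratum `Π_n`. -/
def PiStr (n : ℕ) : Set Term := (Strata n).1

/-- The stratum `Σ_n`. -/
def SigStr (n : ℕ) : Set Term := (Strata n).2

/-- The specification of the rank function `φ : 𝒯 → ω`. -/
def PhiSpec (φ : Term → ℕ) : Prop :=
  (∀ M N, HasNF M → HasNF N → Conv M N → φ M = φ N) ∧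
  (∀ T, HasNF T → Conv T .prop → φ T = 2) ∧
  (∀ T j, HasNF T → Conv T (.type j) → φ T = 3 + j) ∧
  (∀ T, T ∈ PiStr 0 → ¬ Conv T .prop → (∀ j, ¬ Conv T (.type j)) → φ T = 1) ∧
  (∀ T A B, HasNF T → (Conv T (.pi A B) ∨ Conv T (.sigma A B)) → φ T = φ A * φ B) ∧
  (∀ T, HasNF T → 0 < φ T)

mutual
/-- Valid contexts of ECC (de Bruijn: the head of the list is the most recent entry). -/
inductive Valid : List Term → Prop
  | nil  : Valid []
  | cons : Typing Γ A (.type j) → Valid (A :: Γ)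

/-- The typing judgement `Γ ⊢ M : A` of ECC. -/
inductive Typing : List Term → Term → Term → Prop
  | prop  : Valid Γ → Typing Γ .prop (.type 0)
  | type  : Valid Γ → Typing Γ (.type j) (.type (j+1))
  | var   : Valid Γ → Γ[n]? = some A → Typing Γ (.var n) (lift (n+1) 0 A)
  | pi1   : Typing Γ A (.type j) → Typing (A :: Γ) B .prop →
            Typing Γ (.pi A B) .prop
  | pi2   : Typing Γ A (.type j) → Typing (A :: Γ) B (.type j) →
            Typing Γ (.pi A B) (.type j)
  | sig   : Typing Γ A (.type j) → Typing (A :: Γ) B (.type j) →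
            Typing Γ (.sigma A B) (.type j)
  | lam   : Typing (A :: Γ) M B → Typing Γ (.lam A M) (.pi A B)
  | app   : Typing Γ M (.pi A B) → Typing Γ N A → Typing Γ (.app M N) (subst0 B N)
  | pair  : Typing Γ M A → Typing Γ N (subst0 B M) → Typing (A :: Γ) B (.type j) →
            Typing Γ (.pair M N (.sigma A B)) (.sigma A B)
  | proj1 : Typing Γ M (.sigma A B) → Typing Γ (.proj1 M) A
  | proj2 : Typing Γ M (.sigma A B) → Typing Γ (.proj2 M) (subst0 B (.proj1 M))
  | cum   : Typing Γ M A → Typing Γ B (.type j) → Cum A B → Typing Γ M B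
end

/-- `Type_j` for `j ∈ ℤ`, with the convention `Type_{-1} = Prop`. -/
def TType (j : ℤ) : Term := if j < 0 then .prop else .type j.toNat

/-- The typing judgement of the restricted system `ECC⁻`: the rules
`(Π2)(Σ)(app)(pair)(⪯)` of ECC are replaced by `(Π2')(Σ')(app')(pair')` and `(≃)_ρ`. -/
inductive TypingM : List Term → Term → Term → Prop
  | prop  : Valid Γ → TypingM Γ .prop (.type 0)
  | type  : Valid Γ → TypingM Γ (.type j) (.type (j+1))
  | var   : Valid Γ → Γ[n]? = some A → TypingM Γ (.var n) (lift (n+1) 0 A)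
  | pi1   : TypingM Γ A (.type j) → TypingM (A :: Γ) B .prop →
            TypingM Γ (.pi A B) .prop
  | pi2'  : TypingM Γ A (TType j) → TypingM (A :: Γ) B (TType k) → 0 ≤ k →
            TypingM Γ (.pi A B) (TType (max (max j k) 0))
  | sig'  : TypingM Γ A (TType j) → TypingM (A :: Γ) B (TType k) →
            TypingM Γ (.sigma A B) (TType (max (max j k) 0))
  | lam   : TypingM (A :: Γ) M B → TypingM Γ (.lam A M) (.pi A B)
  | app'  : TypingM Γ M (.pi A B) → TypingM Γ N A' → Cum A' A →
            TypingM Γ (.app M N) (subst0 B N)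
  | pair' : TypingM Γ M A → TypingM Γ N C → TypingM (A' :: Γ) B' (.type j) →
            Cum A A' → Cum C (subst0 B' M) →
            TypingM Γ (.pair M N (.sigma A' B')) (.sigma A' B')
  | proj1 : TypingM Γ M (.sigma A B) → TypingM Γ (.proj1 M) A
  | proj2 : TypingM Γ M (.sigma A B) → TypingM Γ (.proj2 M) (subst0 B (.proj1 M))
  | conv  : TypingM Γ M A → Conv A A' → Typing Γ A' (.type j) → TypingM Γ M A'

end ECC

/-!
`φ` is invariant under conversion, positive, and multiplicative on Π and Σ, so if the
components of two binder types are ordered by `φ`, one of them strictly, then so are the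
binder types; induction on the derivation of `≺ᵢ` (resp. `⪯`) gives the claim. To apply the
hypotheses on `φ` to the components of a term that is merely convertible to a binder type,
normalisability must be closed under conversion. This follows from the Church–Rosser theorem
for `Red`, proved with parallel reduction and Takahashi's complete developments.
-/

namespace ECC

open Relation

theorem lift_lift_of_le {j k : ℕ} (d e : ℕ) (t : Term) (h : j ≤ k) :
    lift d (k + e) (lift e j t) = lift e j (lift d k t) := by
  induction t generalizing j k <;> grind [lift]

theorem lift_lift_eq_lift_add {j k : ℕ} (d e : ℕ) (t : Term) (h₁ : k ≤ j) (h₂ : j ≤ k + d) :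
    lift e j (lift d k t) = lift (d + e) k t := by
  induction t generalizing j k <;> grind [lift]

theorem subst_lift_succ {j k : ℕ} (N : Term) (d : ℕ) (t : Term) (h₁ : k ≤ j) (h₂ : j ≤ k + d) :
    subst N j (lift (d + 1) k t) = lift d k t := by
  induction t generalizing j k <;> grind [lift, subst]

theorem lift_subst (N : Term) (d k j : ℕ) (t : Term) :
    lift d (j + k) (subst N j t) = subst (lift d k N) j (lift d (j + k + 1) t) := by
  induction t generalizing j <;> grind [lift, subst, lift_lift_of_le]

theorem subst_lift (N : Term) (i k m : ℕ) (t : Term) :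
    subst N (m + i + k) (lift i m t) = lift i m (subst N (m + k) t) := by
  induction t generalizing m <;> grind [lift, subst, lift_lift_eq_lift_add]

theorem subst_subst (N Q : Term) (j i : ℕ) (t : Term) :
    subst N (i + j) (subst Q i t) = subst (subst N j Q) i (subst N (i + j + 1) t) := by
  induction t generalizing i with
  | var n => have := subst_lift N i j 0 Q; grind [subst, subst_lift_succ]
  | _ => grind [subst]

inductive Par : Term → Term → Prop
  | var : Par (.var n) (.var n)
  | prop : Par .prop .prop
  | type : Par (.type j) (.type j)
  | pi : Par A A' → Par B B' → Par (.pi A B) (.pi A' B')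
  | sigma : Par A A' → Par B B' → Par (.sigma A B) (.sigma A' B')
  | lam : Par A A' → Par M M' → Par (.lam A M) (.lam A' M')
  | app : Par M M' → Par N N' → Par (.app M N) (.app M' N')
  | pair : Par M M' → Par N N' → Par B B' → Par (.pair M N B) (.pair M' N' B')
  | proj1 : Par M M' → Par (.proj1 M) (.proj1 M')
  | proj2 : Par M M' → Par (.proj2 M) (.proj2 M')
  | beta : Par M M' → Par N N' → Par (.app (.lam A M) N) (subst0 M' N')
  | pr1 : Par M M' → Par (.proj1 (.pair M N B)) M'
  | pr2 : Par N N' → Par (.proj2 (.pair M N B)) N'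

theorem Par.rfl {t : Term} : Par t t := by
  induction t <;> constructor <;> assumption

theorem Red.par {t u : Term} (h : Red t u) : Par t u := by
  induction h <;> constructor <;> first | assumption | exact Par.rfl

theorem reflTransGen_red_congr₂ (f : Term → Term → Term) {A A' B B' : Term}
    (hf₁ : ∀ {A A'} B, Red A A' → Red (f A B) (f A' B))
    (hf₂ : ∀ A {B B'}, Red B B' → Red (f A B) (f A B'))
    (hA : ReflTransGen Red A A') (hB : ReflTransGen Red B B') :
    ReflTransGen Red (f A B) (f A' B') :=
  (ReflTransGen.lift (f · B) (fun _ _ => hf₁ B) _ _ hA).trans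
    (ReflTransGen.lift (f A' ·) (fun _ _ => hf₂ A') _ _ hB)

theorem Par.reflTransGen_red {t u : Term} (h : Par t u) : ReflTransGen Red t u := by
  induction h with
  | var | prop | type => rfl
  | pi _ _ ihA ihB => exact reflTransGen_red_congr₂ .pi (fun _ => .piL) (fun _ => .piR) ihA ihB
  | sigma _ _ ihA ihB =>
    exact reflTransGen_red_congr₂ .sigma (fun _ => .sigmaL) (fun _ => .sigmaR) ihA ihB
  | lam _ _ ihA ihM =>
    exact reflTransGen_red_congr₂ .lam (fun _ => .lamL) (fun _ => .lamR) ihA ihM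
  | app _ _ ihM ihN =>
    exact reflTransGen_red_congr₂ .app (fun _ => .appL) (fun _ => .appR) ihM ihN
  | @pair _ M' _ N' B _ _ _ _ ihM ihN ihB =>
    exact (reflTransGen_red_congr₂ (Term.pair · · B) (fun _ => .pairL) (fun _ => .pairR)
      ihM ihN).trans (ReflTransGen.lift (Term.pair M' N') (fun _ _ => .pairB) _ _ ihB)
  | proj1 _ ih => exact ReflTransGen.lift Term.proj1 (fun _ _ => .proj1C) _ _ ih
  | proj2 _ ih => exact ReflTransGen.lift Term.proj2 (fun _ _ => .proj2C) _ _ ih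
  | beta _ _ ihM ihN =>
    exact (reflTransGen_red_congr₂ .app (fun _ => .appL) (fun _ => .appR)
      (reflTransGen_red_congr₂ .lam (fun _ => .lamL) (fun _ => .lamR) .refl ihM) ihN).tail .beta
  | pr1 _ ih => exact ih.head .pr1
  | pr2 _ ih => exact ih.head .pr2

theorem Par.lift {t u : Term} (h : Par t u) (d k : ℕ) : Par (lift d k t) (lift d k u) := by
  induction h generalizing k with
  | var => simp only [ECC.lift]; split_ifs <;> exact .var
  | @beta _ M' _ N' _ _ _ ihM ihN =>
    have := lift_subst N' d k 0 M'
    simp only [Nat.zero_add] at this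
    simp only [ECC.lift, subst0, this]
    exact .beta (ihM _) (ihN _)
  | _ => simp only [ECC.lift]; constructor <;> apply_assumption

theorem Par.subst {t t' N N' : Term} (h : Par t t') (hN : Par N N') (k : ℕ) :
    Par (subst N k t) (subst N' k t') := by
  induction h generalizing k with
  | var => simp only [ECC.subst]; split_ifs <;> first | exact .var | exact hN.lift k 0
  | @beta _ M' _ P' _ _ _ ihM ihP =>
    have := subst_subst N' P' k 0 M'
    simp only [Nat.zero_add] at this
    simp only [ECC.subst, subst0, this]
    exact .beta (ihM _) (ihP _)
  | _ => simp only [ECC.subst]; constructor <;> apply_assumption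

def develop : Term → Term
  | .var n => .var n
  | .prop => .prop
  | .type j => .type j
  | .pi A B => .pi (develop A) (develop B)
  | .sigma A B => .sigma (develop A) (develop B)
  | .lam A M => .lam (develop A) (develop M)
  | .app (.lam _ M) N => subst0 (develop M) (develop N)
  | .app M N => .app (develop M) (develop N)
  | .pair M N B => .pair (develop M) (develop N) (develop B)
  | .proj1 (.pair M _ _) => develop M
  | .proj1 M => .proj1 (develop M)
  | .proj2 (.pair _ N _) => develop N
  | .proj2 M => .proj2 (develop M)

theorem Par.develop {t u : Term} (h : Par t u) : Par u (develop t) := by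
  induction h with
  | app hM _ ihM ihN =>
    cases hM with
    | lam => cases ihM with | lam _ hP => exact .beta hP ihN
    | _ => exact .app ihM ihN
  | proj1 hM ihM =>
    cases hM with
    | pair => cases ihM with | pair hP _ _ => exact .pr1 hP
    | _ => exact .proj1 ihM
  | proj2 hM ihM =>
    cases hM with
    | pair => cases ihM with | pair _ hQ _ => exact .pr2 hQ
    | _ => exact .proj2 ihM
  | beta _ _ ihM ihN => exact ihM.subst ihN 0
  | pr1 _ ih | pr2 _ ih => exact ih
  | _ => constructor <;> assumption

theorem reflTransGen_par_eq_red : ReflTransGen Par = ReflTransGen Red :=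
  le_antisymm (reflTransGen_closed fun _ _ => Par.reflTransGen_red)
    (ReflTransGen.mono fun _ _ => Red.par)

theorem Conv.join {a b : Term} (h : Conv a b) : Join (ReflTransGen Red) a b := by
  have hequiv : Equivalence (Join (ReflTransGen Red)) := by
    rw [← reflTransGen_par_eq_red]
    exact equivalence_join_reflTransGen fun t _ _ hu hv =>
      ⟨develop t, .single hu.develop, .single hv.develop⟩
  have := hequiv.isEquiv
  exact EqvGen.eqvGen_le (fun _ _ h => ⟨_, .single h, .refl⟩) _ _ h

theorem Conv.congr₂ (f : Term → Term → Term) {A A' B B' : Term}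
    (hf₁ : ∀ {A A'} B, Red A A' → Red (f A B) (f A' B))
    (hf₂ : ∀ A {B B'}, Red B B' → Red (f A B) (f A B'))
    (hA : Conv A A') (hB : Conv B B') : Conv (f A B) (f A' B') := by
  have map (g : Term → Term) (hg : ∀ {a b}, Red a b → Red (g a) (g b)) {a b : Term}
      (h : Conv a b) : Conv (g a) (g b) := by
    induction h with
    | rel _ _ h => exact .rel _ _ (hg h)
    | refl => exact .refl _
    | symm _ _ _ ih => exact .symm _ _ ih
    | trans _ _ _ _ _ ih₁ ih₂ => exact .trans _ _ _ ih₁ ih₂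
  exact .trans _ _ _ (map (f · B) (hf₁ B) hA) (map (f A') (hf₂ A') hB)

theorem conv_pi {A A' B B' : Term} (hA : Conv A A') (hB : Conv B B') :
    Conv (.pi A B) (.pi A' B') :=
  Conv.congr₂ _ (fun _ => .piL) (fun _ => .piR) hA hB

theorem conv_sigma {A A' B B' : Term} (hA : Conv A A') (hB : Conv B B') :
    Conv (.sigma A B) (.sigma A' B') :=
  Conv.congr₂ _ (fun _ => .sigmaL) (fun _ => .sigmaR) hA hB

theorem HasNF.of_conv {a b : Term} (ha : HasNF a) (h : Conv a b) : HasNF b := by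
  obtain ⟨w, haw, hw⟩ := ha
  have hbw : Conv b w := .trans _ _ _ (.symm _ _ h) (EqvGen.reflTransGen_le_eqvGen _ _ _ haw)
  obtain ⟨c, hbc, hwc⟩ := hbw.join
  obtain rfl := (reflTransGen_iff_eq hw).1 hwc
  exact ⟨c, hbc, hw⟩

theorem hasNF_prop : HasNF .prop := ⟨_, .refl, fun _ h => nomatch h⟩

theorem hasNF_type (j : ℕ) : HasNF (.type j) := ⟨_, .refl, fun _ h => nomatch h⟩

theorem reflTransGen_red_pi_inv {A B t : Term} (h : ReflTransGen Red (.pi A B) t) :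
    ∃ A' B', t = .pi A' B' ∧ ReflTransGen Red A A' ∧ ReflTransGen Red B B' := by
  induction h with
  | refl => exact ⟨A, B, rfl, .refl, .refl⟩
  | tail _ h ih =>
    obtain ⟨A', B', rfl, hA, hB⟩ := ih
    cases h with
    | piL h => exact ⟨_, _, rfl, hA.tail h, hB⟩
    | piR h => exact ⟨_, _, rfl, hA, hB.tail h⟩

theorem reflTransGen_red_sigma_inv {A B t : Term} (h : ReflTransGen Red (.sigma A B) t) :
    ∃ A' B', t = .sigma A' B' ∧ ReflTransGen Red A A' ∧ ReflTransGen Red B B' := by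
  induction h with
  | refl => exact ⟨A, B, rfl, .refl, .refl⟩
  | tail _ h ih =>
    obtain ⟨A', B', rfl, hA, hB⟩ := ih
    cases h with
    | sigmaL h => exact ⟨_, _, rfl, hA.tail h, hB⟩
    | sigmaR h => exact ⟨_, _, rfl, hA, hB.tail h⟩

theorem hasNF_pi_iff {A B : Term} : HasNF (.pi A B) ↔ HasNF A ∧ HasNF B := by
  constructor
  · rintro ⟨w, hw, hnf⟩
    obtain ⟨A', B', rfl, hA, hB⟩ := reflTransGen_red_pi_inv hw
    exact ⟨⟨A', hA, fun _ h => hnf _ h.piL⟩, ⟨B', hB, fun _ h => hnf _ h.piR⟩⟩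
  · rintro ⟨⟨A', hA, hA'⟩, ⟨B', hB, hB'⟩⟩
    refine ⟨.pi A' B', reflTransGen_red_congr₂ _ (fun _ => .piL) (fun _ => .piR) hA hB, ?_⟩
    intro _ h
    cases h with
    | piL h => exact hA' _ h
    | piR h => exact hB' _ h

theorem hasNF_sigma_iff {A B : Term} : HasNF (.sigma A B) ↔ HasNF A ∧ HasNF B := by
  constructor
  · rintro ⟨w, hw, hnf⟩
    obtain ⟨A', B', rfl, hA, hB⟩ := reflTransGen_red_sigma_inv hw
    exact ⟨⟨A', hA, fun _ h => hnf _ h.sigmaL⟩, ⟨B', hB, fun _ h => hnf _ h.sigmaR⟩⟩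
  · rintro ⟨⟨A', hA, hA'⟩, ⟨B', hB, hB'⟩⟩
    refine ⟨.sigma A' B',
      reflTransGen_red_congr₂ _ (fun _ => .sigmaL) (fun _ => .sigmaR) hA hB, ?_⟩
    intro _ h
    cases h with
    | sigmaL h => exact hA' _ h
    | sigmaR h => exact hB' _ h

theorem Cum.hasNF {M N : Term} (h : Cum M N) (hM : HasNF M) : HasNF N := by
  induction h with
  | conv h => exact hM.of_conv h
  | propType => exact hasNF_type 0
  | typeType => exact hasNF_type _
  | pi hA _ ihB =>
    obtain ⟨hAnf, hBnf⟩ := hasNF_pi_iff.1 hM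
    exact hasNF_pi_iff.2 ⟨hAnf.of_conv hA, ihB hBnf⟩
  | sigma _ _ ihA ihB =>
    obtain ⟨hAnf, hBnf⟩ := hasNF_sigma_iff.1 hM
    exact hasNF_sigma_iff.2 ⟨ihA hAnf, ihB hBnf⟩
  | trans _ _ ih₁ ih₂ => exact ih₂ (ih₁ hM)

namespace PhiSpec

variable {φ : Term → ℕ}

theorem eq_of_conv (hφ : PhiSpec φ) {M N : Term} (hM : HasNF M) (hN : HasNF N)
    (h : Conv M N) : φ M = φ N :=
  hφ.1 M N hM hN h

theorem prop_eq (hφ : PhiSpec φ) : φ .prop = 2 :=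
  hφ.2.1 _ hasNF_prop (.refl _)

theorem type_eq (hφ : PhiSpec φ) (j : ℕ) : φ (.type j) = 3 + j :=
  hφ.2.2.1 _ j (hasNF_type j) (.refl _)

theorem eq_mul_of_conv_pi (hφ : PhiSpec φ) {M A B : Term} (hM : HasNF M)
    (h : Conv M (.pi A B)) : φ M = φ A * φ B :=
  hφ.2.2.2.2.1 M A B hM (.inl h)

theorem eq_mul_of_conv_sigma (hφ : PhiSpec φ) {M A B : Term} (hM : HasNF M)
    (h : Conv M (.sigma A B)) : φ M = φ A * φ B :=
  hφ.2.2.2.2.1 M A B hM (.inr h)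

theorem pos (hφ : PhiSpec φ) {M : Term} (hM : HasNF M) : 0 < φ M :=
  hφ.2.2.2.2.2 M hM

theorem le_of_not_conv_imp_lt (hφ : PhiSpec φ) {M N : Term} (hM : HasNF M) (hN : HasNF N)
    (h : ¬Conv M N → φ M < φ N) : φ M ≤ φ N := by
  by_cases hMN : Conv M N
  · exact (hφ.eq_of_conv hM hN hMN).le
  · exact (h hMN).le

theorem mul_lt_mul_of_not_conv (hφ : PhiSpec φ) {A A' B B' : Term} (hA : HasNF A)
    (hA' : HasNF A') (hB : HasNF B) (hB' : HasNF B') (ihA : ¬Conv A A' → φ A < φ A')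
    (ihB : ¬Conv B B' → φ B < φ B') (h : ¬(Conv A A' ∧ Conv B B')) :
    φ A * φ B < φ A' * φ B' := by
  by_cases hAA' : Conv A A'
  · rw [hφ.eq_of_conv hA hA' hAA']
    exact Nat.mul_lt_mul_of_pos_left (ihB fun hBB' => h ⟨hAA', hBB'⟩) (hφ.pos hA')
  · exact Nat.mul_lt_mul_of_lt_of_le (ihA hAA') (hφ.le_of_not_conv_imp_lt hB hB' ihB)
      (hφ.pos hB')

theorem lt_of_conv_pi (hφ : PhiSpec φ) {M N A A' B B' : Term} (hMnf : HasNF M) (hNnf : HasNF N)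
    (hM : Conv M (.pi A B)) (hN : Conv N (.pi A' B')) (ihA : ¬Conv A A' → φ A < φ A')
    (ihB : HasNF B → HasNF B' → ¬Conv B B' → φ B < φ B') (hMN : ¬Conv M N) : φ M < φ N := by
  obtain ⟨hA, hB⟩ := hasNF_pi_iff.1 (hMnf.of_conv hM)
  obtain ⟨hA', hB'⟩ := hasNF_pi_iff.1 (hNnf.of_conv hN)
  rw [hφ.eq_mul_of_conv_pi hMnf hM, hφ.eq_mul_of_conv_pi hNnf hN]
  refine hφ.mul_lt_mul_of_not_conv hA hA' hB hB' ihA (ihB hB hB') fun ⟨hAA', hBB'⟩ => hMN ?_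
  exact .trans _ _ _ hM (.trans _ _ _ (conv_pi hAA' hBB') (.symm _ _ hN))

theorem lt_of_conv_sigma (hφ : PhiSpec φ) {M N A A' B B' : Term} (hMnf : HasNF M)
    (hNnf : HasNF N) (hM : Conv M (.sigma A B)) (hN : Conv N (.sigma A' B'))
    (ihA : HasNF A → HasNF A' → ¬Conv A A' → φ A < φ A')
    (ihB : HasNF B → HasNF B' → ¬Conv B B' → φ B < φ B') (hMN : ¬Conv M N) : φ M < φ N := by
  obtain ⟨hA, hB⟩ := hasNF_sigma_iff.1 (hMnf.of_conv hM)
  obtain ⟨hA', hB'⟩ := hasNF_sigma_iff.1 (hNnf.of_conv hN)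
  rw [hφ.eq_mul_of_conv_sigma hMnf hM, hφ.eq_mul_of_conv_sigma hNnf hN]
  refine hφ.mul_lt_mul_of_not_conv hA hA' hB hB' (ihA hA hA') (ihB hB hB')
    fun ⟨hAA', hBB'⟩ => hMN ?_
  exact .trans _ _ _ hM (.trans _ _ _ (conv_sigma hAA' hBB') (.symm _ _ hN))

theorem lt_of_cumL (hφ : PhiSpec φ) {i : ℕ} {M N : Term} (h : CumL i M N) (hM : HasNF M)
    (hN : HasNF N) (hMN : ¬Conv M N) : φ M < φ N := by
  induction h with
  | conv h => exact absurd h hMN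
  | propType => rw [hφ.prop_eq, hφ.type_eq]; omega
  | typeType hjk => rw [hφ.type_eq, hφ.type_eq]; omega
  | succ _ ih => exact ih hM hN hMN
  | pi hM' hN' hA _ ihB => exact hφ.lt_of_conv_pi hM hN hM' hN' (absurd hA) ihB hMN
  | sigma hM' hN' _ _ ihA ihB => exact hφ.lt_of_conv_sigma hM hN hM' hN' ihA ihB hMN

theorem lt_of_cum (hφ : PhiSpec φ) {M N : Term} (h : Cum M N) (hM : HasNF M) (hN : HasNF N)
    (hMN : ¬Conv M N) : φ M < φ N := by
  induction h with
  | conv h => exact absurd h hMN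
  | propType => rw [hφ.prop_eq, hφ.type_eq]; omega
  | @typeType j k hjk =>
    have : j ≠ k := by rintro rfl; exact hMN (.refl _)
    rw [hφ.type_eq, hφ.type_eq]; omega
  | pi hA _ ihB => exact hφ.lt_of_conv_pi hM hN (.refl _) (.refl _) (absurd hA) ihB hMN
  | sigma _ _ ihA ihB => exact hφ.lt_of_conv_sigma hM hN (.refl _) (.refl _) ihA ihB hMN
  | @trans A B C h₁ _ ih₁ ih₂ =>
    have hB := h₁.hasNF hM
    by_cases hAB : Conv A B
    · rw [hφ.eq_of_conv hM hB hAB]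
      exact ih₂ hB hN fun hBC => hMN (.trans _ _ _ hAB hBC)
    · exact (ih₁ hM hB hAB).trans_le (hφ.le_of_not_conv_imp_lt hB hN (ih₂ hB hN))

end PhiSpec

end ECC

/-- the rank function `φ` is strictly monotone with respect to strict
cumulativity: for `M, N ∈ 𝒯` and `i ∈ ω`, `M ≺ᵢ N` implies `φ(M) < φ(N)`; consequently
`M ≺ N` implies `φ(M) < φ(N)`. -/
theorem rank_strict_mono (φ : ECC.Term → ℕ) (hφ : ECC.PhiSpec φ) :
    (∀ (i : ℕ) (M N : ECC.Term), ECC.HasNF M → ECC.HasNF N →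
      ECC.SCumL i M N → φ M < φ N) ∧
    (∀ M N : ECC.Term, ECC.HasNF M → ECC.HasNF N →
      ECC.SCum M N → φ M < φ N) :=
  ⟨fun _ _ _ hM hN h => hφ.lt_of_cumL h.1 hM hN h.2,
    fun _ _ hM hN h => hφ.lt_of_cum h.1 hM hN h.2⟩
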